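/- Let k be a field, let A be a quantum graded algebra with a straightening law on a finite poset (Π, ≤st), and let Ω be a Π-ideal. Then the set of standard monomials which involve an element of Ω (i.e. standard monomials α₁⋯α_s with α₁ ≤st ⋯ ≤st α_s such that some αᵢ ∈ Ω) forms a k-vector space basis of the two-sided ideal ⟨Ω⟩ of A generated by Ω. -/

import Mathlib

/-- A *quantum graded algebra with a straightening law* over the field `k`, on the finite
poset `ι` (whose elements are realised in `A` via the map `elem`). -/
structure QuantumGradedASL (k : Type*) [Field k] (A : Type*) [Ring A] [Algebra k A]
    (𝒜 : ℕ → Submodule k A) (ι : Type*) [PartialOrder ι] [Finite ι] where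
  /-- the map realising the elements of the poset `Π = ι` as elements of `A` -/
  elem : ι → A
  /-- `A` is an `ℕ`-graded `k`-algebra with grading `𝒜` -/
  graded : GradedAlgebra 𝒜
  /-- (1) the elements of `Π` are homogeneous of positive degree -/
  homog : ∀ i : ι, ∃ d : ℕ, 0 < d ∧ elem i ∈ 𝒜 d
  /-- (2) the elements of `Π` generate `A` as a `k`-algebra -/
  gen : Algebra.adjoin k (Set.range elem) = ⊤
  /-- (3) the standard monomials (products of the `elem i` along nondecreasing lists,
  the empty product being `1`) form a linearly independent family -/
  indep : LinearIndependent k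
    (fun l : {l : List ι // l.Chain' (· ≤ ·)} => ((l : List ι).map elem).prod)
  /-- (4) if `a`, `b` are incomparable then `elem a * elem b` is a linear combination of
  terms `elem lam` or `elem lam * elem mu` with `lam ≤ mu`, `lam < a` and `lam < b` -/
  straighten : ∀ a b : ι, ¬ a ≤ b → ¬ b ≤ a →
    elem a * elem b ∈ Submodule.span k {x : A | ∃ lam : ι, lam < a ∧ lam < b ∧
      (x = elem lam ∨ ∃ mu : ι, lam ≤ mu ∧ x = elem lam * elem mu)}
  /-- (5) for all `a`, `b` there is `0 ≠ c ∈ k` such that `elem a * elem b - c • (elem b * elem a)`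
  is a linear combination of terms `elem lam` or `elem lam * elem mu` with `lam ≤ mu`,
  `lam < a` and `lam < b` -/
  comm : ∀ a b : ι, ∃ c : k, c ≠ 0 ∧
    elem a * elem b - c • (elem b * elem a) ∈
      Submodule.span k {x : A | ∃ lam : ι, lam < a ∧ lam < b ∧
        (x = elem lam ∨ ∃ mu : ι, lam ≤ mu ∧ x = elem lam * elem mu)}

/-!
A product `elem α * m` with `m` standard is straightened, by induction on the length of `m`
and then on `α` (well founded as `Π` is finite), into standard monomials of length at most
`|m| + 1`: the right-hand sides of axioms (4) and (5) have length at most two and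
begin with a letter below both letters they replace. Hence every letter of the original word lies
above a letter of each standard monomial produced, so a word meeting the `Π`-ideal `Ω`
straightens into standard monomials meeting `Ω`. Since words span `A`, the span of the standard
monomials meeting `Ω` is then a two-sided ideal; it contains `elem '' Ω` and lies in `⟨Ω⟩`.
Linear independence is inherited from axiom (3).
-/

namespace List

variable {α : Type*} [Preorder α]

def upperClosure (l : List α) : UpperSet α :=
  _root_.upperClosure {a | a ∈ l}

@[simp]
lemma upperClosure_cons (a : α) (l : List α) :
    (a :: l).upperClosure = UpperSet.Ici a ⊓ l.upperClosure := by
  rw [upperClosure, upperClosure, ← upperClosure_singleton, ← upperClosure_union]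
  congr 1
  ext
  simp

lemma exists_mem_of_upperClosure_le {Ω : Set α} (hΩ : IsLowerSet Ω) {l w : List α}
    (h : l.upperClosure ≤ w.upperClosure) (hw : ∃ a ∈ w, a ∈ Ω) : ∃ b ∈ l, b ∈ Ω := by
  obtain ⟨a, ha, haΩ⟩ := hw
  obtain ⟨b, hb, hba⟩ := mem_upperClosure.1 (h (subset_upperClosure ha))
  exact ⟨b, hb, hΩ hba haΩ⟩

end List

lemma TwoSidedIdeal.list_prod_mem {R : Type*} [Ring R] {I : TwoSidedIdeal R} {l : List R}
    (h : ∃ x ∈ l, x ∈ I) : l.prod ∈ I := by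
  obtain ⟨x, hx, hxI⟩ := h
  obtain ⟨s, t, rfl⟩ := List.append_of_mem hx
  rw [List.prod_append, List.prod_cons, ← mul_assoc]
  exact I.mul_mem_right _ _ (I.mul_mem_left _ _ hxI)

namespace Submodule

section Semiring

variable {k A : Type*} [CommSemiring k] [Semiring A] [Algebra k A]

lemma mul_left_mem_of_mem_span {S : Set A} {T : Submodule k A} {x : A} (hx : x ∈ span k S)
    (y : A) (h : ∀ s ∈ S, y * s ∈ T) : y * x ∈ T :=
  (span_le (p := T.comap (LinearMap.mulLeft k y))).2 h hx

lemma mul_right_mem_of_mem_span {S : Set A} {T : Submodule k A} {x : A} (hx : x ∈ span k S)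
    (y : A) (h : ∀ s ∈ S, s * y ∈ T) : x * y ∈ T :=
  (span_le (p := T.comap (LinearMap.mulRight k y))).2 h hx

lemma mul_mem_and_mem_mul_of_adjoin_eq_top {s : Set A} (hs : Algebra.adjoin k s = ⊤)
    {V : Submodule k A} (hV : ∀ a ∈ s, ∀ v ∈ V, a * v ∈ V ∧ v * a ∈ V) (x : A) :
    ∀ v ∈ V, x * v ∈ V ∧ v * x ∈ V := by
  induction (hs ▸ Algebra.mem_top : x ∈ Algebra.adjoin k s) using Algebra.adjoin_induction with
  | mem a ha => exact hV a ha
  | algebraMap r =>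
    intro v hv
    rw [← Algebra.smul_def, ← Algebra.commutes, ← Algebra.smul_def]
    exact ⟨V.smul_mem r hv, V.smul_mem r hv⟩
  | add x y _ _ hx hy =>
    intro v hv
    rw [add_mul, mul_add]
    exact ⟨add_mem (hx v hv).1 (hy v hv).1, add_mem (hx v hv).2 (hy v hv).2⟩
  | mul x y _ _ hx hy =>
    intro v hv
    rw [mul_assoc, ← mul_assoc v]
    exact ⟨(hx _ (hy v hv).1).1, (hy _ (hx v hv).2).2⟩

end Semiring

section Ring

variable {k A : Type*} [CommRing k] [Ring A] [Algebra k A]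

def toTwoSidedIdeal (V : Submodule k A) (hV : ∀ x, ∀ v ∈ V, x * v ∈ V ∧ v * x ∈ V) :
    TwoSidedIdeal A :=
  .mk' V V.zero_mem V.add_mem V.neg_mem (fun hv ↦ (hV _ _ hv).1) (fun hv ↦ (hV _ _ hv).2)

@[simp]
lemma coe_toTwoSidedIdeal (V : Submodule k A) (hV : ∀ x, ∀ v ∈ V, x * v ∈ V ∧ v * x ∈ V) :
    (V.toTwoSidedIdeal hV : Set A) = V := by
  ext
  simp [toTwoSidedIdeal]

end Ring

end Submodule

namespace QuantumGradedASL

variable {k : Type*} [Field k] {A : Type*} [Ring A] [Algebra k A]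
  {𝒜 : ℕ → Submodule k A} {ι : Type*} [PartialOrder ι] [Finite ι]
  (Q : QuantumGradedASL k A 𝒜 ι)

/-- The set spanning the right-hand sides of axioms (4) and (5) for `a`, `b`. -/
def lowerTerms (a b : ι) : Set A :=
  {x : A | ∃ lam : ι, lam < a ∧ lam < b ∧
    (x = Q.elem lam ∨ ∃ mu : ι, lam ≤ mu ∧ x = Q.elem lam * Q.elem mu)}

/-- `l.upperClosure ≤ w.upperClosure` says that every letter of `w` lies above a letter of `l`
(upper sets are ordered by reverse inclusion), so `l` meets every lower set that `w` meets. -/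
def standardSpan (n : ℕ) (w : List ι) : Submodule k A :=
  Submodule.span k {x | ∃ l : List ι, l.IsChain (· ≤ ·) ∧ l.length ≤ n ∧
    l.upperClosure ≤ w.upperClosure ∧ x = (l.map Q.elem).prod}

variable {Q}

lemma prod_mem_standardSpan {n : ℕ} {l : List ι} (hl : l.IsChain (· ≤ ·))
    (hn : l.length ≤ n) : (l.map Q.elem).prod ∈ Q.standardSpan n l :=
  Submodule.subset_span ⟨l, hl, hn, le_rfl, rfl⟩

lemma standardSpan_mono {n n' : ℕ} {w w' : List ι} (hn : n ≤ n')
    (hw : w.upperClosure ≤ w'.upperClosure) : Q.standardSpan n w ≤ Q.standardSpan n' w' :=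
  Submodule.span_mono fun _ ⟨l, hl, hln, hlw, hx⟩ ↦ ⟨l, hl, hln.trans hn, hlw.trans hw, hx⟩

lemma mul_mem_of_mem_standardSpan {n : ℕ} {w : List ι} {x : A} (hx : x ∈ Q.standardSpan n w)
    (y : A) {T : Submodule k A} (h : ∀ l : List ι, l.IsChain (· ≤ ·) → l.length ≤ n →
      l.upperClosure ≤ w.upperClosure → y * (l.map Q.elem).prod ∈ T) : y * x ∈ T := by
  refine Submodule.mul_left_mem_of_mem_span hx y ?_
  rintro _ ⟨l, hl, hln, hlw, rfl⟩
  exact h l hl hln hlw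

variable (Q) in
def MulStraightens (n : ℕ) (α : ι) : Prop :=
  ∀ m : List ι, m.IsChain (· ≤ ·) → m.length ≤ n →
    Q.elem α * (m.map Q.elem).prod ∈ Q.standardSpan (n + 1) (α :: m)

lemma mul_prod_mem_of_mem_span_lowerTerms {n : ℕ} {α β : ι}
    (ih : ∀ γ, Q.MulStraightens n γ) (ihα : ∀ γ < α, Q.MulStraightens (n + 1) γ)
    {m : List ι} (hm : m.IsChain (· ≤ ·)) (hmn : m.length ≤ n)
    {y : A} (hy : y ∈ Submodule.span k (Q.lowerTerms α β)) :
    y * (m.map Q.elem).prod ∈ Q.standardSpan (n + 2) (α :: β :: m) := by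
  refine Submodule.mul_right_mem_of_mem_span hy _ ?_
  rintro _ ⟨lam, hlα, hlβ, rfl | ⟨mu, -, rfl⟩⟩
  · refine standardSpan_mono (by omega) ?_ (ih lam m hm hmn)
    simp [hlα.le, hlβ.le]
  · rw [mul_assoc]
    refine mul_mem_of_mem_standardSpan (ih mu m hm hmn) _ fun l hl hln hlw ↦ ?_
    refine standardSpan_mono le_rfl ?_ (ihα lam hlα l hl hln)
    have hlm : l.upperClosure ≤ m.upperClosure := hlw.trans (by simp)
    simp [hlα.le, hlβ.le, inf_le_of_right_le hlm]

lemma mulStraightens_succ {n : ℕ} {α : ι} (ih : ∀ γ, Q.MulStraightens n γ)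
    (ihα : ∀ γ < α, Q.MulStraightens (n + 1) γ) : Q.MulStraightens (n + 1) α := by
  rintro (_ | ⟨β, m⟩) hm hmn
  · simpa using
      prod_mem_standardSpan (Q := Q) (List.isChain_singleton α) (n := n + 2) (by simp)
  have hm' : m.IsChain (· ≤ ·) := hm.tail
  have hmn' : m.length ≤ n := by simpa using hmn
  rw [List.map_cons, List.prod_cons]
  by_cases hαβ : α ≤ β
  · simpa using prod_mem_standardSpan (Q := Q) (List.isChain_cons_cons.2 ⟨hαβ, hm⟩)
      (n := n + 2) (by simpa using hmn)
  by_cases hβα : β ≤ α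
  · obtain ⟨c, -, hc⟩ := Q.comm α β
    have hswap : Q.elem α * (Q.elem β * (m.map Q.elem).prod) =
        (Q.elem α * Q.elem β - c • (Q.elem β * Q.elem α)) * (m.map Q.elem).prod +
          c • (Q.elem β * (Q.elem α * (m.map Q.elem).prod)) := by
      simp [sub_mul, mul_assoc]
    rw [hswap]
    refine add_mem (mul_prod_mem_of_mem_span_lowerTerms ih ihα hm' hmn' hc)
      (Submodule.smul_mem _ _ ?_)
    refine mul_mem_of_mem_standardSpan (ih α m hm' hmn') _ fun l hl hln hlw ↦ ?_
    refine standardSpan_mono le_rfl ?_ (ihα β (lt_of_le_not_ge hβα hαβ) l hl hln)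
    have hlm : l.upperClosure ≤ m.upperClosure := hlw.trans (by simp)
    simp [hβα, inf_le_of_right_le hlm]
  · rw [← mul_assoc]
    exact mul_prod_mem_of_mem_span_lowerTerms ih ihα hm' hmn' (Q.straighten α β hαβ hβα)

theorem mulStraightens (n : ℕ) (α : ι) : Q.MulStraightens n α := by
  induction n generalizing α with
  | zero =>
    rintro (_ | ⟨β, m⟩) hm hmn
    · simpa using prod_mem_standardSpan (Q := Q) (List.isChain_singleton α) (n := 1) (by simp)
    · simp at hmn
  | succ n ih =>
    induction α using WellFoundedLT.induction with
    | _ α ihα => exact mulStraightens_succ ih ihα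

theorem prod_mem_standardSpan_length (w : List ι) :
    (w.map Q.elem).prod ∈ Q.standardSpan w.length w := by
  induction w with
  | nil => exact prod_mem_standardSpan List.isChain_nil le_rfl
  | cons a w ih =>
    rw [List.map_cons, List.prod_cons]
    refine mul_mem_of_mem_standardSpan ih _ fun l hl hln hlw ↦ ?_
    exact standardSpan_mono le_rfl (by simpa using inf_le_inf_left _ hlw)
      (mulStraightens _ a l hl hln)

variable (Q)

def spanStandardMeeting (Ω : Set ι) : Submodule k A :=
  Submodule.span k (Set.range fun l : {l : List ι // l.IsChain (· ≤ ·) ∧ ∃ a ∈ l, a ∈ Ω} ↦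
    ((l : List ι).map Q.elem).prod)

lemma prod_mem_spanStandardMeeting {Ω : Set ι} (hΩ : IsLowerSet Ω) {w : List ι}
    (hw : ∃ a ∈ w, a ∈ Ω) : (w.map Q.elem).prod ∈ Q.spanStandardMeeting Ω := by
  refine Submodule.span_mono ?_ (Q.prod_mem_standardSpan_length w)
  rintro _ ⟨l, hl, -, hlw, rfl⟩
  exact ⟨⟨l, hl, List.exists_mem_of_upperClosure_le hΩ hlw hw⟩, rfl⟩

lemma elem_mul_mem_and_mem_mul_elem {Ω : Set ι} (hΩ : IsLowerSet Ω) :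
    ∀ a ∈ Set.range Q.elem, ∀ v ∈ Q.spanStandardMeeting Ω,
      a * v ∈ Q.spanStandardMeeting Ω ∧ v * a ∈ Q.spanStandardMeeting Ω := by
  rintro _ ⟨a, rfl⟩ v hv
  refine ⟨Submodule.mul_left_mem_of_mem_span hv _ ?_,
    Submodule.mul_right_mem_of_mem_span hv _ ?_⟩ <;> rintro _ ⟨⟨l, -, b, hb, hbΩ⟩, rfl⟩
  · simpa using Q.prod_mem_spanStandardMeeting hΩ (w := a :: l)
      ⟨b, List.mem_cons_of_mem a hb, hbΩ⟩
  · simpa using Q.prod_mem_spanStandardMeeting hΩ (w := l ++ [a])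
      ⟨b, List.mem_append_left _ hb, hbΩ⟩

lemma spanStandardMeeting_subset (Ω : Set ι) :
    (Q.spanStandardMeeting Ω : Set A) ⊆ TwoSidedIdeal.span (Q.elem '' Ω) := by
  refine Submodule.span_le (p := (TwoSidedIdeal.span (Q.elem '' Ω)).asIdeal.restrictScalars k)
    |>.2 ?_
  rintro _ ⟨⟨l, -, a, ha, haΩ⟩, rfl⟩
  exact TwoSidedIdeal.list_prod_mem (I := TwoSidedIdeal.span (Q.elem '' Ω))
    ⟨_, List.mem_map_of_mem ha, TwoSidedIdeal.subset_span ⟨a, haΩ, rfl⟩⟩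

lemma twoSidedIdeal_span_subset_spanStandardMeeting {Ω : Set ι} (hΩ : IsLowerSet Ω) :
    (TwoSidedIdeal.span (Q.elem '' Ω) : Set A) ⊆ Q.spanStandardMeeting Ω := by
  have hV := Submodule.mul_mem_and_mem_mul_of_adjoin_eq_top Q.gen
    (Q.elem_mul_mem_and_mem_mul_elem hΩ)
  rw [← Submodule.coe_toTwoSidedIdeal _ hV]
  refine SetLike.coe_subset_coe.2 <| TwoSidedIdeal.span_le.2 ?_
  rintro _ ⟨a, ha, rfl⟩
  simpa using Q.prod_mem_spanStandardMeeting hΩ (w := [a]) ⟨a, List.mem_singleton_self a, ha⟩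

end QuantumGradedASL

/-- Let `A` be a quantum graded A.S.L. on the finite poset `(Π, ≤st)` and let
`Ω` be a `Π`-ideal.  The standard monomials which involve an element of `Ω` form a `k`-vector
space basis of the two-sided ideal `⟨Ω⟩` of `A` generated by `Ω`: they are linearly independent
and their `k`-linear span is exactly `⟨Ω⟩`. -/
theorem qasl_pi_ideal_standard_basis {k : Type*} [Field k] {A : Type*} [Ring A] [Algebra k A]
    {𝒜 : ℕ → Submodule k A} {ι : Type*} [PartialOrder ι] [Finite ι]
    (Q : QuantumGradedASL k A 𝒜 ι) (Ω : Set ι) (hΩ : IsLowerSet Ω) :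
    LinearIndependent k
      (fun l : {l : List ι // l.Chain' (· ≤ ·) ∧ ∃ a ∈ l, a ∈ Ω} =>
        ((l : List ι).map Q.elem).prod) ∧
    (Submodule.span k
        (Set.range (fun l : {l : List ι // l.Chain' (· ≤ ·) ∧ ∃ a ∈ l, a ∈ Ω} =>
          ((l : List ι).map Q.elem).prod)) : Set A)
      = (TwoSidedIdeal.span (Q.elem '' Ω) : Set A) :=
  ⟨Q.indep.comp _ (Subtype.impEmbedding _ _ fun _ h ↦ h.1).injective,
    (Q.spanStandardMeeting_subset Ω).antisymm (Q.twoSidedIdeal_span_subset_spanStandardMeeting hΩ)⟩
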